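/- arXiv:1202.0502 — 4 statements merged into one kernel-verified Lean document; each statement's English description precedes it below -/
import Mathlib

section
/- With crit as above, if λ̂ and μ̂ are both minimizers of crit over ℝ^M, then f_λ̂(x_i) = f_μ̂(x_i) for all i = 1,…,n; i.e., all minimizers give the same fitted values. -/
open Finset

/-- If `λ̂` and `μ̂` are both minimizers of the LASSO criterion, then
they give the same fitted values: `f_λ̂ (x i) = f_μ̂ (x i)` for all `i`. -/
theorem lasso_unique_fit
    {X : Type*} (n M : ℕ) (hn : 0 < n)
    (x : Fin n → X) (b : Fin n → ℝ) (hb : ∀ i, b i ≠ 0) (y : Fin n → ℝ)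
    (φ : Fin M → X → ℝ) (r : Fin M → ℝ) (hr : ∀ j, 0 < r j)
    (crit : (Fin M → ℝ) → ℝ)
    (hcrit : ∀ lam : Fin M → ℝ,
      crit lam = (1 / n : ℝ) * ∑ i : Fin n,
          (y i - b i * ∑ j : Fin M, lam j * φ j (x i)) ^ 2
        + 2 * ∑ j : Fin M, r j * |lam j|)
    (lamhat muhat : Fin M → ℝ)
    (hmin1 : ∀ lam : Fin M → ℝ, crit lamhat ≤ crit lam)
    (hmin2 : ∀ lam : Fin M → ℝ, crit muhat ≤ crit lam) :
    ∀ i : Fin n, ∑ j : Fin M, lamhat j * φ j (x i) = ∑ j : Fin M, muhat j * φ j (x i) := by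
  set F : Fin n → ℝ := fun i => ∑ j : Fin M, lamhat j * φ j (x i) with hF
  set G : Fin n → ℝ := fun i => ∑ j : Fin M, muhat j * φ j (x i) with hG
  set m : Fin M → ℝ := fun j => (lamhat j + muhat j) / 2 with hm
  have hFm : ∀ i, (∑ j : Fin M, m j * φ j (x i)) = (F i + G i) / 2 := by
    intro i
    simp only [hm, hF, hG]
    rw [← Finset.sum_add_distrib, Finset.sum_div]
    exact Finset.sum_congr rfl fun j _ => by ring
  have heq : crit lamhat = crit muhat := le_antisymm (hmin1 _) (hmin2 _)
  set Q : ℝ := (1 / n : ℝ) * ∑ i : Fin n, (b i * (F i - G i) / 2) ^ 2 with hQ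
  have hn' : (0:ℝ) < (1 / n : ℝ) := by positivity
  have hkey : crit m + Q ≤ crit lamhat := by
    rw [hcrit m]
    have hquad : (1 / n : ℝ) * ∑ i : Fin n, (y i - b i * ∑ j : Fin M, m j * φ j (x i)) ^ 2 + Q
        = ((1 / n : ℝ) * ∑ i : Fin n, (y i - b i * F i) ^ 2
           + (1 / n : ℝ) * ∑ i : Fin n, (y i - b i * G i) ^ 2) / 2 := by
      simp only [hFm, hQ]
      rw [← mul_add, ← Finset.sum_add_distrib]
      have h : ∀ i ∈ Finset.univ (α := Fin n),
          (y i - b i * ((F i + G i) / 2)) ^ 2 + (b i * (F i - G i) / 2) ^ 2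
          = ((y i - b i * F i) ^ 2 + (y i - b i * G i) ^ 2) / 2 := fun i _ => by ring
      rw [Finset.sum_congr rfl h, ← Finset.sum_div, Finset.sum_add_distrib]
      ring
    have hpen : (2:ℝ) * ∑ j : Fin M, r j * |m j|
        ≤ (2 * ∑ j : Fin M, r j * |lamhat j| + 2 * ∑ j : Fin M, r j * |muhat j|) / 2 := by
      rw [← mul_add, ← Finset.sum_add_distrib]
      have : ∑ j : Fin M, r j * |m j| ≤ ∑ j : Fin M, (r j * |lamhat j| + r j * |muhat j|) / 2 := by
        apply Finset.sum_le_sum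
        intro j _
        have habs : |m j| ≤ (|lamhat j| + |muhat j|) / 2 := by
          rw [hm]
          calc |(lamhat j + muhat j) / 2| = |lamhat j + muhat j| / 2 := by
                rw [abs_div]; norm_num
            _ ≤ (|lamhat j| + |muhat j|) / 2 := by
                gcongr; exact abs_add_le _ _
        calc r j * |m j| ≤ r j * ((|lamhat j| + |muhat j|) / 2) :=
              mul_le_mul_of_nonneg_left habs (hr j).le
          _ = (r j * |lamhat j| + r j * |muhat j|) / 2 := by ring
      calc (2:ℝ) * ∑ j : Fin M, r j * |m j|
          ≤ 2 * ∑ j : Fin M, (r j * |lamhat j| + r j * |muhat j|) / 2 := by linarith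
        _ = (2 * ∑ j : Fin M, (r j * |lamhat j| + r j * |muhat j|)) / 2 := by
            rw [← Finset.sum_div]; ring
    have : (1 / n : ℝ) * ∑ i : Fin n, (y i - b i * ∑ j : Fin M, m j * φ j (x i)) ^ 2
        + 2 * ∑ j : Fin M, r j * |m j| + Q
        ≤ (crit lamhat + crit muhat) / 2 := by
      rw [hcrit lamhat, hcrit muhat]
      linarith [hquad, hpen]
    linarith [this, heq]
  have hQle : Q ≤ 0 := by
    have := hmin1 m
    linarith
  have hsum0 : ∑ i : Fin n, (b i * (F i - G i) / 2) ^ 2 = 0 := by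
    have hnn : (0:ℝ) ≤ ∑ i : Fin n, (b i * (F i - G i) / 2) ^ 2 :=
      Finset.sum_nonneg fun i _ => sq_nonneg _
    nlinarith [hQle, hn']
  intro i
  have h0 : (b i * (F i - G i) / 2) ^ 2 = 0 := by
    have := (Finset.sum_eq_zero_iff_of_nonneg (fun i _ => sq_nonneg
      (b i * (F i - G i) / 2))).mp hsum0 i (Finset.mem_univ i)
    exact this
  have := pow_eq_zero_iff (n := 2) (by norm_num) |>.mp h0
  have hb' := hb i
  have : F i - G i = 0 := by
    rcases mul_eq_zero.mp (by linarith [this] : b i * (F i - G i) = 0) with h | h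
    · exact absurd h hb'
    · exact h
  linarith [this]
end

section
/- Suppose ‖f̂ − f‖_n² ≤ ‖f_λ − f‖_n² + 4 r_n ‖Δ‖_1 − ‖f_Δ‖_n², ( ‖Δ_{J₀^c}‖_1 − ‖Δ_{J₀}‖_1 )_+ ≤ 2Λ, and ‖f_Δ‖_n ≥ κ ‖Δ_{J₀}‖_2 − (2μ/√s) Λ, where |J₀| = s, κ > 0, μ ≥ 0, Λ ≥ 0, r_n ≥ 0. Then for every α > 0: ‖f̂ − f‖_n² ≤ ‖f_λ − f‖_n² + α (1 + 2μ/κ)² Λ²/s + 16 s (1/α + 1/κ²) r_n². -/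
open Finset

set_option maxHeartbeats 1000000 in
/-- the key algebraic step in the oracle inequality.  Given
`A ≤ B + 4 rₙ ‖Δ‖₁ - D²`, `(‖Δ_{J₀ᶜ}‖₁ - ‖Δ_{J₀}‖₁)₊ ≤ 2Λ` and
`D ≥ κ ‖Δ_{J₀}‖₂ - (2μ/√s) Λ` with `|J₀| = s`, `κ > 0`, `μ ≥ 0`, `Λ ≥ 0`,
`rₙ ≥ 0`, one has for every `α > 0`:
`A ≤ B + α (1 + 2μ/κ)² Λ²/s + 16 s (1/α + 1/κ²) rₙ²`. -/
theorem oracle_algebraic_step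
    (M : ℕ) (Δ : Fin M → ℝ) (J₀ : Finset (Fin M)) (s : ℕ)
    (hs : 1 ≤ s) (hcard : J₀.card = s)
    (A B D rn κ μ Λ : ℝ)
    (hA0 : 0 ≤ A) (hD0 : 0 ≤ D) (hrn : 0 ≤ rn) (hκ : 0 < κ) (hμ : 0 ≤ μ) (hΛ : 0 ≤ Λ)
    (h1 : A ≤ B + 4 * rn * (∑ j : Fin M, |Δ j|) - D ^ 2)
    (h2 : max ((∑ j ∈ J₀ᶜ, |Δ j|) - ∑ j ∈ J₀, |Δ j|) 0 ≤ 2 * Λ)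
    (h3 : κ * Real.sqrt (∑ j ∈ J₀, (Δ j) ^ 2) - (2 * μ / Real.sqrt s) * Λ ≤ D) :
    ∀ α : ℝ, 0 < α →
      A ≤ B + α * (1 + 2 * μ / κ) ^ 2 * Λ ^ 2 / s
        + 16 * s * (1 / α + 1 / κ ^ 2) * rn ^ 2 := by
  intro α hα
  set T := ∑ j ∈ J₀, |Δ j| with hT
  set Tc := ∑ j ∈ J₀ᶜ, |Δ j| with hTcdef
  set N2 := Real.sqrt (∑ j ∈ J₀, (Δ j) ^ 2) with hN2def
  set ss := Real.sqrt s with hssdef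
  set S := (s : ℝ) with hSdef
  set c := 1 + 2 * μ / κ with hcdef
  have hS : (0:ℝ) < S := by rw [hSdef]; exact_mod_cast Nat.lt_of_lt_of_le Nat.zero_lt_one hs
  have hss : 0 < ss := Real.sqrt_pos.mpr hS
  have hssS : ss ^ 2 = S := Real.sq_sqrt hS.le
  have hN2 : 0 ≤ N2 := Real.sqrt_nonneg _
  -- sum split
  have hsum : ∑ j : Fin M, |Δ j| = T + Tc := (Finset.sum_add_sum_compl J₀ _).symm
  have hTc : Tc ≤ T + 2 * Λ := by
    have := le_trans (le_max_left (Tc - T) 0) h2; linarith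
  -- Cauchy-Schwarz : T ≤ ss * N2
  have hTnn : 0 ≤ T := by rw [hT]; exact Finset.sum_nonneg fun j _ => abs_nonneg _
  have hCS : T ≤ ss * N2 := by
    have h0 : T ^ 2 ≤ S * ∑ j ∈ J₀, (Δ j) ^ 2 := by
      have h := sq_sum_le_card_mul_sum_sq (s := J₀) (f := fun j => |Δ j|)
      simp only [sq_abs, hcard] at h
      rw [hT, hSdef]; exact_mod_cast h
    calc T = Real.sqrt (T ^ 2) := (Real.sqrt_sq hTnn).symm
      _ ≤ Real.sqrt (S * ∑ j ∈ J₀, (Δ j) ^ 2) := Real.sqrt_le_sqrt h0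
      _ = ss * N2 := by rw [Real.sqrt_mul hS.le, hssdef, hN2def, hSdef]
  -- from h3 : κ * (ss * N2) ≤ D * ss + 2 μ Λ
  have hF2 : κ * (ss * N2) ≤ D * ss + 2 * μ * Λ := by
    have h := mul_le_mul_of_nonneg_right h3 hss.le
    have e : (2 * μ / ss) * Λ * ss = 2 * μ * Λ := by field_simp; try ring
    nlinarith [h]
  -- bound 8 rn ss N2
  have hb : 8 * rn * (ss * N2) ≤ 8 * rn * ((D * ss + 2 * μ * Λ) / κ) := by
    have h : ss * N2 ≤ (D * ss + 2 * μ * Λ) / κ := (le_div_iff₀' hκ).mpr hF2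
    exact mul_le_mul_of_nonneg_left h (by positivity)
  have e2 : 8 * rn * ((D * ss + 2 * μ * Λ) / κ)
      = 8 * rn * D * ss / κ + (8 * rn * Λ * c - 8 * rn * Λ) := by
    rw [hcdef]; field_simp; try ring
  have key1 : 8 * rn * D * ss / κ ≤ D ^ 2 + 16 * rn ^ 2 * S / κ ^ 2 := by
    have h0 : 8 * rn * D * ss * κ ≤ D ^ 2 * κ ^ 2 + 16 * rn ^ 2 * S := by
      nlinarith [sq_nonneg (D * κ - 4 * rn * ss), hssS]
    calc 8 * rn * D * ss / κ = (8 * rn * D * ss * κ) / κ ^ 2 := by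
          field_simp; try ring
      _ ≤ (D ^ 2 * κ ^ 2 + 16 * rn ^ 2 * S) / κ ^ 2 := by gcongr
      _ = D ^ 2 + 16 * rn ^ 2 * S / κ ^ 2 := by field_simp; try ring
  have key2 : 8 * rn * Λ * c ≤ α * c ^ 2 * Λ ^ 2 / S + 16 * S * rn ^ 2 / α := by
    have h0 : 8 * rn * Λ * c * (S * α) ≤ α ^ 2 * c ^ 2 * Λ ^ 2 + 16 * S ^ 2 * rn ^ 2 := by
      nlinarith [sq_nonneg (4 * rn * S - α * c * Λ)]
    calc 8 * rn * Λ * c = (8 * rn * Λ * c * (S * α)) / (S * α) := by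
          field_simp
      _ ≤ (α ^ 2 * c ^ 2 * Λ ^ 2 + 16 * S ^ 2 * rn ^ 2) / (S * α) := by
          gcongr <;> positivity
      _ = α * c ^ 2 * Λ ^ 2 / S + 16 * S * rn ^ 2 / α := by field_simp; try ring
  have hbT : 8 * rn * T ≤ 8 * rn * (ss * N2) :=
    mul_le_mul_of_nonneg_left hCS (by positivity)
  have hfinal : 16 * S * (1 / α + 1 / κ ^ 2) * rn ^ 2
      = 16 * S * rn ^ 2 / α + 16 * rn ^ 2 * S / κ ^ 2 := by ring
  have h4 : rn * Tc ≤ rn * (T + 2 * Λ) := mul_le_mul_of_nonneg_left hTc hrn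
  rw [hsum] at h1
  linarith
end

section
/- Let S* ⊂ {1,…,M} with cardinality s*, and let ρ ≥ 0 satisfy |⟨φ_j, φ_k⟩| ≤ ρ ‖φ_j‖_n ‖φ_k‖_n for all distinct j, k with k ∈ S*. If ρ s* < 1, then for any vectors λ*, μ̂ ∈ ℝ^M supported on S*: (Σ_{k∈S*} |λ*_k − μ̂_k| ‖φ_k‖_n)² ≤ (s* / (1 − ρ s*)) ‖f_{λ*} − f_{μ̂}‖_n², where f_λ = Σ_j λ_j φ_j and ⟨f,g⟩ = (1/n)Σ_i b_i² f(x_i)g(x_i), ‖h‖_n² = ⟨h,h⟩. -/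
open Finset

/-- weighted ℓ1/ℓ2 comparison on the support.  If
`|⟨φ j, φ k⟩| ≤ ρ ‖φ j‖ₙ ‖φ k‖ₙ` for all distinct `j, k` with `k ∈ S*`, and
`ρ s* < 1` with `s* = |S*|`, then for vectors `λ*, μ̂` supported on `S*`:
`(∑_{k∈S*} |λ* k - μ̂ k| ‖φ k‖ₙ)² ≤ (s*/(1 - ρ s*)) ‖f_{λ*} - f_{μ̂}‖ₙ²`. -/
theorem weighted_l1_l2_comparison
    {X : Type*} (n M : ℕ) (hn : 0 < n)
    (x : Fin n → X) (b : Fin n → ℝ) (φ : Fin M → X → ℝ)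
    (Sstar : Finset (Fin M)) (sstar : ℕ) (hcard : Sstar.card = sstar)
    (nrm : Fin M → ℝ)
    (hnrm : ∀ j, nrm j =
      Real.sqrt ((1 / n : ℝ) * ∑ i : Fin n, (b i) ^ 2 * (φ j (x i)) ^ 2))
    (ρ : ℝ) (hρ0 : 0 ≤ ρ)
    (hcoh : ∀ k ∈ Sstar, ∀ j : Fin M, j ≠ k →
      |(1 / n : ℝ) * ∑ i : Fin n, (b i) ^ 2 * φ j (x i) * φ k (x i)| ≤ ρ * nrm j * nrm k)
    (hρs : ρ * sstar < 1)
    (lamstar muhat : Fin M → ℝ)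
    (hsupp1 : ∀ j ∉ Sstar, lamstar j = 0) (hsupp2 : ∀ j ∉ Sstar, muhat j = 0) :
    (∑ k ∈ Sstar, |lamstar k - muhat k| * nrm k) ^ 2 ≤
      (sstar / (1 - ρ * sstar)) *
        ((1 / n : ℝ) * ∑ i : Fin n, (b i) ^ 2 *
          ((∑ j : Fin M, lamstar j * φ j (x i)) - ∑ j : Fin M, muhat j * φ j (x i)) ^ 2) := by
  set δ : Fin M → ℝ := fun k => lamstar k - muhat k with hδ
  set a : Fin M → ℝ := fun k => |δ k| * nrm k with ha
  have hnn : ∀ j, 0 ≤ nrm j := fun j => (hnrm j) ▸ Real.sqrt_nonneg _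
  have hsq : ∀ j, nrm j ^ 2 = (1/(n:ℝ)) * ∑ i : Fin n, (b i)^2 * (φ j (x i))^2 := by
    intro j
    rw [hnrm j, Real.sq_sqrt]
    positivity
  have hfi : ∀ i, (∑ j : Fin M, lamstar j * φ j (x i)) - ∑ j : Fin M, muhat j * φ j (x i)
      = ∑ j ∈ Sstar, δ j * φ j (x i) := by
    intro i
    rw [← Finset.sum_sub_distrib, ← Finset.sum_subset (Finset.subset_univ Sstar)]
    · exact Finset.sum_congr rfl fun j _ => by simp [hδ]; ring
    · intro j _ hj; rw [hsupp1 j hj, hsupp2 j hj]; ring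
  simp only [hfi]
  set Q : ℝ := (1/(n:ℝ)) * ∑ i : Fin n, (b i)^2 * (∑ j ∈ Sstar, δ j * φ j (x i))^2 with hQdef
  set G : Fin M → Fin M → ℝ := fun j k => (1/(n:ℝ)) * ∑ i : Fin n, (b i)^2 * φ j (x i) * φ k (x i) with hG
  have hexp : Q = ∑ j ∈ Sstar, ∑ k ∈ Sstar, δ j * δ k * G j k := by
    have h1 : ∀ i : Fin n, (b i)^2 * (∑ j ∈ Sstar, δ j * φ j (x i))^2
        = ∑ j ∈ Sstar, ∑ k ∈ Sstar, δ j * δ k * ((b i)^2 * φ j (x i) * φ k (x i)) := by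
      intro i
      rw [sq (∑ j ∈ Sstar, δ j * φ j (x i)), Finset.sum_mul_sum, Finset.mul_sum]
      refine Finset.sum_congr rfl fun j _ => ?_
      rw [Finset.mul_sum]
      exact Finset.sum_congr rfl fun k _ => by ring
    rw [hQdef]
    simp_rw [h1, Finset.mul_sum]
    rw [Finset.sum_comm]
    refine Finset.sum_congr rfl fun j _ => ?_
    rw [Finset.sum_comm]
    refine Finset.sum_congr rfl fun k _ => ?_
    simp only [hG, Finset.mul_sum]
    exact Finset.sum_congr rfl fun i _ => by ring
  set S1 : ℝ := ∑ k ∈ Sstar, a k with hS1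
  set S2 : ℝ := ∑ k ∈ Sstar, a k ^ 2 with hS2
  have hlow : (1+ρ)*S2 - ρ*S1^2 ≤ Q := by
    have hterm : ∀ j ∈ Sstar, ∀ k ∈ Sstar,
        (if j = k then a j ^ 2 else -(ρ * a j * a k)) ≤ δ j * δ k * G j k := by
      intro j hj k hk
      by_cases h : j = k
      · subst h
        have hGd : G j j = nrm j ^ 2 := by
          rw [hG, hsq]; simp [sq, mul_assoc]
        rw [if_pos rfl, hGd]
        simp only [ha]
        rw [mul_pow, sq_abs, pow_two (δ j)]
      · simp only [if_neg h]
        have hb := hcoh k hk j h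
        have h2 : |δ j * δ k * G j k| ≤ |δ j| * |δ k| * (ρ * nrm j * nrm k) := by
          rw [abs_mul, abs_mul]
          exact mul_le_mul_of_nonneg_left hb (by positivity)
        have h3 := neg_abs_le (δ j * δ k * G j k)
        simp only [ha]
        nlinarith
    calc (1+ρ)*S2 - ρ*S1^2
        = ∑ j ∈ Sstar, ∑ k ∈ Sstar, (if j = k then a j ^ 2 else -(ρ * a j * a k)) := by
          have hj1 : ∀ j ∈ Sstar, ∑ k ∈ Sstar, (if j = k then a j ^ 2 else -(ρ * a j * a k))
              = (1+ρ) * a j ^ 2 - ρ * a j * S1 := by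
            intro j hj
            have hsplit : ∀ k ∈ Sstar, (if j = k then a j ^ 2 else -(ρ * a j * a k))
                = -(ρ * a j * a k) + (if j = k then a j ^ 2 + ρ * a j * a j else 0) := by
              intro k _
              by_cases h : j = k
              · subst h; simp
              · simp [h]
            rw [Finset.sum_congr rfl hsplit, Finset.sum_add_distrib, Finset.sum_ite_eq, if_pos hj,
              Finset.sum_neg_distrib, ← Finset.mul_sum, ← hS1]
            ring
          rw [Finset.sum_congr rfl hj1, Finset.sum_sub_distrib]
          simp_rw [← Finset.mul_sum, ← hS2]
          have : ∑ j ∈ Sstar, ρ * a j * S1 = ρ * S1 * S1 := by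
            rw [← Finset.sum_mul, ← Finset.mul_sum, ← hS1]
          rw [this]; ring
      _ ≤ ∑ j ∈ Sstar, ∑ k ∈ Sstar, δ j * δ k * G j k := by
          refine Finset.sum_le_sum fun j hj => Finset.sum_le_sum fun k hk => hterm j hj k hk
      _ = Q := hexp.symm
  have hCS : S1 ^ 2 ≤ (sstar : ℝ) * S2 := by
    have := sq_sum_le_card_mul_sum_sq (s := Sstar) (f := a)
    rwa [hcard] at this
  have hd : 0 < 1 - ρ * (sstar : ℝ) := by linarith
  rw [div_mul_eq_mul_div, le_div_iff₀ hd]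
  have hs0 : (0:ℝ) ≤ (sstar : ℝ) := Nat.cast_nonneg _
  nlinarith [mul_le_mul_of_nonneg_left hlow hs0, mul_le_mul_of_nonneg_left hCS (by linarith : (0:ℝ) ≤ 1+ρ), sq_nonneg S1, mul_nonneg hρ0 (sq_nonneg S1)]
end

section
/- If for every j ∉ S* one has strict inequality |(1/n) Σ_i y_i b_i φ_j(x_i) − Σ_{k∈S*} μ̃_k ⟨φ_j, φ_k⟩| < r̃_{n,j}, where μ̃ minimizes the restricted criterion critS* over ℝ^{S*}, then every minimizer λ̂ of the full criterion crit over ℝ^M has support contained in S*. -/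
open Finset

lemma lasso_expand_sq {X : Type*} {n M : ℕ} (x : Fin n → X) (y b : Fin n → ℝ)
    (φ : Fin M → X → ℝ) (μ v : Fin M → ℝ) :
    ∑ i : Fin n, (y i - b i * ∑ j : Fin M, v j * φ j (x i)) ^ 2
      = ∑ i : Fin n, (y i - b i * ∑ j : Fin M, μ j * φ j (x i)) ^ 2
        - 2 * ∑ j : Fin M, (v j - μ j) *
            (∑ i : Fin n, (y i - b i * ∑ k : Fin M, μ k * φ k (x i)) * b i * φ j (x i))
        + ∑ i : Fin n, (b i * ∑ j : Fin M, (v j - μ j) * φ j (x i)) ^ 2 := by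
  have hmid : ∑ j : Fin M, (v j - μ j) *
        (∑ i : Fin n, (y i - b i * ∑ k : Fin M, μ k * φ k (x i)) * b i * φ j (x i))
      = ∑ i : Fin n, (y i - b i * ∑ k : Fin M, μ k * φ k (x i)) * b i *
          (∑ j : Fin M, (v j - μ j) * φ j (x i)) := by
    simp_rw [Finset.mul_sum]
    rw [Finset.sum_comm]
    exact Finset.sum_congr rfl fun i _ => Finset.sum_congr rfl fun j _ => by ring
  rw [hmid, Finset.mul_sum, ← Finset.sum_sub_distrib, ← Finset.sum_add_distrib]
  refine Finset.sum_congr rfl fun i _ => ?_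
  have hv : ∑ j : Fin M, v j * φ j (x i)
      = ∑ j : Fin M, μ j * φ j (x i) + ∑ j : Fin M, (v j - μ j) * φ j (x i) := by
    rw [← Finset.sum_add_distrib]
    exact Finset.sum_congr rfl fun j _ => by ring
  rw [hv]; ring

/-- Lemma `supplemma`: if for every `j ∉ S*`,
`|(1/n) ∑ i, y i * b i * φ j (x i) - ∑_{k∈S*} μ̃ k ⟨φ j, φ k⟩| < r̃ j`, where `μ̃`
minimizes the restricted criterion `critS*`, then every minimizer `λ̂` of the
full criterion `crit` has support contained in `S*`. -/
theorem lasso_support_inclusion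
    {X : Type*} (n M : ℕ) (hn : 0 < n)
    (x : Fin n → X) (b : Fin n → ℝ) (hb : ∀ i, b i ≠ 0) (y : Fin n → ℝ)
    (φ : Fin M → X → ℝ) (rt : Fin M → ℝ) (hrt : ∀ j, 0 < rt j)
    (Sstar : Finset (Fin M))
    (crit : (Fin M → ℝ) → ℝ)
    (hcrit : ∀ lam : Fin M → ℝ,
      crit lam = (1 / n : ℝ) * ∑ i : Fin n,
          (y i - b i * ∑ j : Fin M, lam j * φ j (x i)) ^ 2
        + 2 * ∑ j : Fin M, rt j * |lam j|)
    (critS : (Fin M → ℝ) → ℝ)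
    (hcritS : ∀ mu : Fin M → ℝ,
      critS mu = (1 / n : ℝ) * ∑ i : Fin n,
          (y i - b i * ∑ j ∈ Sstar, mu j * φ j (x i)) ^ 2
        + 2 * ∑ j ∈ Sstar, rt j * |mu j|)
    (mutilde : Fin M → ℝ) (hsuppmu : ∀ j ∉ Sstar, mutilde j = 0)
    (hminS : ∀ mu : Fin M → ℝ, critS mutilde ≤ critS mu)
    (hstrict : ∀ j ∉ Sstar,
      |(1 / n : ℝ) * (∑ i : Fin n, y i * b i * φ j (x i)) -
          ∑ k ∈ Sstar, mutilde k *
            ((1 / n : ℝ) * ∑ i : Fin n, (b i) ^ 2 * φ j (x i) * φ k (x i))| < rt j)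
    (lamhat : Fin M → ℝ) (hmin : ∀ lam : Fin M → ℝ, crit lamhat ≤ crit lam) :
    ∀ j ∉ Sstar, lamhat j = 0 := by
  classical
  -- the "correlation" coefficients
  set c : Fin M → ℝ := fun j =>
    (1 / n : ℝ) * ∑ i : Fin n,
      (y i - b i * ∑ k : Fin M, mutilde k * φ k (x i)) * b i * φ j (x i) with hc
  -- c agrees with the expression in hstrict
  have hceq : ∀ j : Fin M, c j =
      (1 / n : ℝ) * (∑ i : Fin n, y i * b i * φ j (x i)) -
        ∑ k ∈ Sstar, mutilde k *
          ((1 / n : ℝ) * ∑ i : Fin n, (b i) ^ 2 * φ j (x i) * φ k (x i)) := by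
    intro j
    have h1 : ∑ i : Fin n, (y i - b i * ∑ k : Fin M, mutilde k * φ k (x i)) * b i * φ j (x i)
        = ∑ i : Fin n, (y i * b i * φ j (x i)
            - ∑ k : Fin M, mutilde k * ((b i) ^ 2 * φ j (x i) * φ k (x i))) := by
      refine Finset.sum_congr rfl fun i _ => ?_
      have h2 : (∑ k : Fin M, mutilde k * φ k (x i)) * ((b i) ^ 2 * φ j (x i))
          = ∑ k : Fin M, mutilde k * ((b i) ^ 2 * φ j (x i) * φ k (x i)) := by
        rw [Finset.sum_mul]
        exact Finset.sum_congr rfl fun k _ => by ring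
      calc (y i - b i * ∑ k : Fin M, mutilde k * φ k (x i)) * b i * φ j (x i)
          = y i * b i * φ j (x i)
            - (∑ k : Fin M, mutilde k * φ k (x i)) * ((b i) ^ 2 * φ j (x i)) := by ring
        _ = _ := by rw [h2]
    have h3 : ∑ k ∈ Sstar, mutilde k *
          ((1 / n : ℝ) * ∑ i : Fin n, (b i) ^ 2 * φ j (x i) * φ k (x i))
        = ∑ k : Fin M, mutilde k *
          ((1 / n : ℝ) * ∑ i : Fin n, (b i) ^ 2 * φ j (x i) * φ k (x i)) :=
      Finset.sum_subset (Finset.subset_univ _)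
        (fun k _ hk => by rw [hsuppmu k hk]; ring)
    have h4 : ∑ k : Fin M, mutilde k *
          ((1 / n : ℝ) * ∑ i : Fin n, (b i) ^ 2 * φ j (x i) * φ k (x i))
        = (1 / n : ℝ) * ∑ k : Fin M, ∑ i : Fin n,
            mutilde k * ((b i) ^ 2 * φ j (x i) * φ k (x i)) := by
      rw [Finset.mul_sum]
      refine Finset.sum_congr rfl fun k _ => ?_
      rw [Finset.mul_sum, Finset.mul_sum, Finset.mul_sum]
      exact Finset.sum_congr rfl fun i _ => by ring
    simp only [hc]
    rw [h1, Finset.sum_sub_distrib, Finset.sum_comm, h3, h4]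
    ring
  have hcc : ∀ j ∉ Sstar, |c j| < rt j := by
    intro j hj
    rw [hceq j]
    exact hstrict j hj
  -- crit equals critS on Sstar-supported vectors
  have hcrit_supported : ∀ w : Fin M → ℝ, (∀ j ∉ Sstar, w j = 0) → crit w = critS w := by
    intro w hw
    rw [hcrit, hcritS]
    have h1 : ∀ i : Fin n, ∑ j : Fin M, w j * φ j (x i) = ∑ j ∈ Sstar, w j * φ j (x i) :=
      fun i => (Finset.sum_subset (Finset.subset_univ _)
        (fun j _ hj => by rw [hw j hj]; ring)).symm
    have h2 : ∑ j : Fin M, rt j * |w j| = ∑ j ∈ Sstar, rt j * |w j| :=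
      (Finset.sum_subset (Finset.subset_univ _)
        (fun j _ hj => by rw [hw j hj]; simp)).symm
    simp_rw [h1, h2]
  have hmutilde_min : ∀ w : Fin M → ℝ, (∀ j ∉ Sstar, w j = 0) → crit mutilde ≤ crit w := by
    intro w hw
    rw [hcrit_supported mutilde hsuppmu, hcrit_supported w hw]
    exact hminS w
  -- quadratic form and expansion
  set Q : (Fin M → ℝ) → ℝ := fun w =>
    (1 / n : ℝ) * ∑ i : Fin n, (b i * ∑ j : Fin M, w j * φ j (x i)) ^ 2 with hQ
  have hQ0 : ∀ w, 0 ≤ Q w := fun w =>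
    mul_nonneg (by positivity) (Finset.sum_nonneg fun i _ => sq_nonneg _)
  have hQscale : ∀ (t : ℝ) (w : Fin M → ℝ), Q (fun j => t * w j) = t ^ 2 * Q w := by
    intro t w
    simp only [hQ]
    have h1 : ∀ i : Fin n, (b i * ∑ j : Fin M, t * w j * φ j (x i)) ^ 2
        = t ^ 2 * (b i * ∑ j : Fin M, w j * φ j (x i)) ^ 2 := by
      intro i
      have h2 : ∑ j : Fin M, t * w j * φ j (x i) = t * ∑ j : Fin M, w j * φ j (x i) := by
        rw [Finset.mul_sum]
        exact Finset.sum_congr rfl fun j _ => by ring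
      rw [h2]; ring
    simp_rw [h1]
    rw [← Finset.mul_sum]
    ring
  have hexp : ∀ v : Fin M → ℝ,
      crit v = crit mutilde
        - 2 * ∑ j : Fin M, (v j - mutilde j) * c j
        + Q (fun j => v j - mutilde j)
        + (2 * ∑ j : Fin M, rt j * |v j| - 2 * ∑ j : Fin M, rt j * |mutilde j|) := by
    intro v
    rw [hcrit v, hcrit mutilde, lasso_expand_sq x y b φ mutilde v]
    have hT : (1 / n : ℝ) * ∑ j : Fin M, (v j - mutilde j) *
          (∑ i : Fin n, (y i - b i * ∑ k : Fin M, mutilde k * φ k (x i)) * b i * φ j (x i))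
        = ∑ j : Fin M, (v j - mutilde j) * c j := by
      rw [Finset.mul_sum]
      refine Finset.sum_congr rfl fun j _ => ?_
      simp only [hc]
      ring
    have hQB : Q (fun j => v j - mutilde j)
        = (1 / n : ℝ) * ∑ i : Fin n, (b i * ∑ j : Fin M, (v j - mutilde j) * φ j (x i)) ^ 2 :=
      rfl
    linear_combination (-2 : ℝ) * hT - hQB
  -- the Sstar-restricted direction
  set uS : Fin M → ℝ := fun j => if j ∈ Sstar then lamhat j - mutilde j else 0 with huS
  set a : ℝ := ∑ j : Fin M,
      (2 * rt j * (|mutilde j + uS j| - |mutilde j|) - 2 * (uS j * c j)) with ha_def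
  have ha_split : a = (∑ j : Fin M, 2 * rt j * (|mutilde j + uS j| - |mutilde j|))
      - 2 * ∑ j : Fin M, uS j * c j := by
    rw [ha_def, Finset.sum_sub_distrib, Finset.mul_sum]
  -- key inequality from minimality of mutilde
  have key : ∀ t : ℝ, 0 < t → t ≤ 1 → 0 ≤ t * Q uS + a := by
    intro t ht ht1
    set w : Fin M → ℝ := fun j => mutilde j + t * uS j with hw
    have hwsupp : ∀ j ∉ Sstar, w j = 0 := by
      intro j hj
      simp only [hw, huS, if_neg hj, hsuppmu j hj]
      ring
    have h1 : crit mutilde ≤ crit w := hmutilde_min w hwsupp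
    rw [hexp w] at h1
    have h2 : ∑ j : Fin M, (w j - mutilde j) * c j = t * ∑ j : Fin M, uS j * c j := by
      rw [Finset.mul_sum]
      refine Finset.sum_congr rfl fun j _ => ?_
      simp only [hw]; ring
    have h3 : Q (fun j => w j - mutilde j) = t ^ 2 * Q uS := by
      have he : (fun j => w j - mutilde j) = fun j => t * uS j := by
        funext j; simp only [hw]; ring
      rw [he, hQscale]
    rw [h2, h3] at h1
    have h4 : 2 * ∑ j : Fin M, rt j * |w j| - 2 * ∑ j : Fin M, rt j * |mutilde j|
        ≤ t * ∑ j : Fin M, 2 * rt j * (|mutilde j + uS j| - |mutilde j|) := by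
      rw [Finset.mul_sum, Finset.mul_sum, Finset.mul_sum, ← Finset.sum_sub_distrib]
      refine Finset.sum_le_sum fun j _ => ?_
      have habs : |mutilde j + t * uS j| ≤ (1 - t) * |mutilde j| + t * |mutilde j + uS j| := by
        have h := abs_add_le ((1 - t) * mutilde j) (t * (mutilde j + uS j))
        have e1 : (1 - t) * mutilde j + t * (mutilde j + uS j) = mutilde j + t * uS j := by ring
        rw [e1, abs_mul, abs_mul, abs_of_nonneg (by linarith : (0:ℝ) ≤ 1 - t),
          abs_of_nonneg ht.le] at h
        exact h
      have hr := (hrt j).le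
      simp only [hw]
      nlinarith [habs, hr]
    have ha_t : t * a = t * (∑ j : Fin M, 2 * rt j * (|mutilde j + uS j| - |mutilde j|))
        - 2 * (t * ∑ j : Fin M, uS j * c j) := by
      rw [ha_split]; ring
    nlinarith [h1, h4, ha_t]
  have ha : 0 ≤ a := by
    by_contra hna
    push_neg at hna
    set s : ℝ := -a / (2 * (Q uS + 1)) with hs_def
    have hQu := hQ0 uS
    have hspos : 0 < s :=
      div_pos (neg_pos.mpr hna) (by linarith)
    have hseq : s * (2 * (Q uS + 1)) = -a := by
      rw [hs_def]
      field_simp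
    set t : ℝ := min 1 s with ht_def
    have ht : 0 < t := lt_min one_pos hspos
    have ht1 : t ≤ 1 := min_le_left _ _
    have hts : t ≤ s := min_le_right _ _
    have hk := key t ht ht1
    nlinarith [mul_le_mul_of_nonneg_right hts hQu, hseq, hQu, hna, hk]
  -- conclusion
  have hlam : crit lamhat ≤ crit mutilde := hmin mutilde
  rw [hexp lamhat] at hlam
  set f : Fin M → ℝ := fun j =>
    2 * rt j * (|lamhat j| - |mutilde j|) - 2 * ((lamhat j - mutilde j) * c j) with hf
  have hf_sum : ∑ j : Fin M, f j ≤ 0 := by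
    have hQn := hQ0 (fun j => lamhat j - mutilde j)
    have e1 : ∑ j : Fin M, f j
        = ∑ j : Fin M, (2 * (rt j * |lamhat j|) - 2 * (rt j * |mutilde j|)
            - 2 * ((lamhat j - mutilde j) * c j)) :=
      Finset.sum_congr rfl fun j _ => by rw [hf]; ring
    rw [e1, Finset.sum_sub_distrib, Finset.sum_sub_distrib, ← Finset.mul_sum,
      ← Finset.mul_sum, ← Finset.mul_sum]
    linarith [hlam, hQn]
  have haf : a = ∑ j ∈ Sstar, f j := by
    rw [ha_def,
      ← Finset.sum_subset (Finset.subset_univ Sstar)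
        (fun j _ hj => by simp [huS, if_neg hj])]
    refine Finset.sum_congr rfl fun j hj => ?_
    simp only [hf, huS, if_pos hj]
    rw [show mutilde j + (lamhat j - mutilde j) = lamhat j by ring]
  have hcompl : ∑ j ∈ Sstarᶜ, f j ≤ 0 := by
    have h := Finset.sum_add_sum_compl Sstar f
    linarith [hf_sum, ha, haf, h]
  have hf_nonneg : ∀ k ∈ Sstarᶜ, 0 ≤ f k := by
    intro k hk
    have hk' : k ∉ Sstar := Finset.mem_compl.mp hk
    have hck := hcc k hk'
    have hmul : lamhat k * c k ≤ |lamhat k| * |c k| := by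
      rw [← abs_mul]; exact le_abs_self _
    rw [hf]
    simp only [hsuppmu k hk', abs_zero, sub_zero]
    nlinarith [abs_nonneg (lamhat k), hck, hmul]
  intro j hj
  have hjc : j ∈ Sstarᶜ := Finset.mem_compl.mpr hj
  have hfj_le : f j ≤ 0 :=
    le_trans (Finset.single_le_sum hf_nonneg hjc) hcompl
  have hck := hcc j hj
  have hmul : lamhat j * c j ≤ |lamhat j| * |c j| := by
    rw [← abs_mul]; exact le_abs_self _
  rw [hf] at hfj_le
  simp only [hsuppmu j hj, abs_zero, sub_zero] at hfj_le
  have h0 : |lamhat j| ≤ 0 := by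
    nlinarith [hfj_le, hck, hmul, abs_nonneg (lamhat j), abs_nonneg (c j)]
  exact abs_eq_zero.mp (le_antisymm h0 (abs_nonneg _))
end
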